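/- arXiv:1709.01891 — 6 statements merged into one kernel-verified Lean document; each statement's English description precedes it below -/
import Mathlib

section
/- Let q be a positive integer, ξ = e^{-iπ/q}, and η(z) = (z+1)/(z-1). Define, for integers m, P(m) = (1 + ξ^m)·(1 + Σ_{k=1}^{q-1} ξ^{km} ∏_{j=1}^{k} η(ξ^j)). Then P(m) = 0 for all m with q ≤ m ≤ 2q-1. -/
/-!
With `ζ` a primitive `2q`-th root of unity and `c_k = ∏_{j=1}^k (ζ^j + 1)/(ζ^j - 1)`, the second
factor of `P(m)` is `G(ζ^m)` for the polynomial `G(w) = Σ_{k<q} c_k w^k`. The recursion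
`c_{k+1}(1 - ζ^{k+1}) = -c_k(1 + ζ^{k+1})`, together with `1 + ζ^q = 0`, makes
`(1 + w) G(w) - (1 - ζ w) G(ζ w)` telescope to zero. Evaluating this functional equation at
`w = -ζ^r` gives `(1 - ζ^r) G(-ζ^r) = (1 + ζ^{r+1}) G(-ζ^{r+1})`; starting from `r = 0`, induction
shows `G(-ζ^r) = 0` for `0 < r < q`. Since `ζ^{q+r} = -ζ^r`, this is `G(ζ^m) = 0` for `q < m < 2q`,
while for `m = q` the first factor `1 + ζ^q` vanishes.
-/

open Complex Finset

section Lewy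

variable {K : Type*} [Field K] {ζ : K} {q : ℕ}

def lewyCoeff (ζ : K) (k : ℕ) : K :=
  ∏ j ∈ Icc 1 k, (ζ ^ j + 1) / (ζ ^ j - 1)

def lewySum (ζ : K) (q : ℕ) (w : K) : K :=
  ∑ k ∈ range q, lewyCoeff ζ k * w ^ k

@[simp]
lemma lewyCoeff_zero : lewyCoeff ζ 0 = 1 := by
  simp [lewyCoeff]

lemma lewyCoeff_succ_mul_one_sub {k : ℕ} (hk : ζ ^ (k + 1) ≠ 1) :
    lewyCoeff ζ (k + 1) * (1 - ζ ^ (k + 1)) = -(lewyCoeff ζ k * (1 + ζ ^ (k + 1))) := by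
  have hk' : ζ ^ (k + 1) - 1 ≠ 0 := sub_ne_zero.mpr hk
  rw [lewyCoeff, prod_Icc_succ_top (by omega), ← lewyCoeff]
  field_simp
  ring

lemma IsPrimitiveRoot.pow_eq_neg_one (hζ : IsPrimitiveRoot ζ (2 * q)) (hq : q ≠ 0) :
    ζ ^ q = -1 :=
  (hζ.pow (by omega) (mul_comm 2 q)).eq_neg_one_of_two_right

lemma IsPrimitiveRoot.one_add_pow_ne_zero (hζ : IsPrimitiveRoot ζ (2 * q)) {k : ℕ}
    (hkq : k < q) : 1 + ζ ^ k ≠ 0 := by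
  intro h
  apply hζ.pow_ne_one_of_pos_of_lt (l := q + k) (by omega) (by omega)
  rw [pow_add, hζ.pow_eq_neg_one (by omega), eq_neg_of_add_eq_zero_right h]
  ring

lemma IsPrimitiveRoot.lewySum_functional_eq (hζ : IsPrimitiveRoot ζ (2 * q)) (w : K) :
    (1 + w) * lewySum ζ q w = (1 - ζ * w) * lewySum ζ q (ζ * w) := by
  obtain _ | n := q
  · simp [lewySum]
  set a : ℕ → K := fun k ↦ lewyCoeff ζ k * (1 + ζ ^ (k + 1)) * w ^ (k + 1)
  have hexpand : (1 + w) * lewySum ζ (n + 1) w - (1 - ζ * w) * lewySum ζ (n + 1) (ζ * w) =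
      ∑ k ∈ range (n + 1), (lewyCoeff ζ k * (1 - ζ ^ k) * w ^ k + a k) := by
    simp only [lewySum, a, mul_sum, ← sum_sub_distrib, mul_pow]
    exact sum_congr rfl fun k _ ↦ by ring
  have hshift : ∀ k < n, lewyCoeff ζ (k + 1) * (1 - ζ ^ (k + 1)) * w ^ (k + 1) = -a k :=
    fun k hk ↦ by
      rw [lewyCoeff_succ_mul_one_sub (hζ.pow_ne_one_of_pos_of_lt (by omega) (by omega))]
      ring
  have hlast : a n = 0 := by simp [a, hζ.pow_eq_neg_one (by omega)]
  rw [← sub_eq_zero, hexpand, sum_add_distrib, sum_range_succ', sum_range_succ, hlast,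
    sum_congr rfl fun k hk ↦ hshift k (mem_range.mp hk)]
  simp

lemma IsPrimitiveRoot.lewySum_neg_pow_eq_zero (hζ : IsPrimitiveRoot ζ (2 * q)) {r : ℕ}
    (hr0 : r ≠ 0) (hrq : r < q) : lewySum ζ q (-ζ ^ r) = 0 := by
  have hweighted : ∀ r < q, (1 - ζ ^ r) * lewySum ζ q (-ζ ^ r) = 0 := by
    intro r
    induction r with
    | zero => simp
    | succ r ih =>
      intro hr
      have h := hζ.lewySum_functional_eq (-ζ ^ r)
      rw [show ζ * -ζ ^ r = -ζ ^ (r + 1) by ring, ← sub_eq_add_neg, ih (by omega),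
        sub_neg_eq_add] at h
      rw [(mul_eq_zero.mp h.symm).resolve_left (hζ.one_add_pow_ne_zero hr), mul_zero]
  exact (mul_eq_zero.mp (hweighted r hrq)).resolve_left
    (sub_ne_zero.mpr (hζ.pow_ne_one_of_pos_of_lt hr0 (by omega)).symm)

lemma one_add_sum_Icc_eq_lewySum (hq : q ≠ 0) (w : K) :
    1 + ∑ k ∈ Icc 1 (q - 1), w ^ k * lewyCoeff ζ k = lewySum ζ q w := by
  obtain _ | n := q
  · contradiction
  rw [lewySum, sum_range_succ', add_tsub_cancel_right, ← Ico_add_one_right_eq_Icc,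
    sum_Ico_eq_sum_range, add_tsub_cancel_right]
  simp only [add_comm 1, mul_comm (w ^ _), lewyCoeff_zero, pow_zero, mul_one]
  ring

theorem IsPrimitiveRoot.lewy_vanishing (hζ : IsPrimitiveRoot ζ (2 * q)) (hq : q ≠ 0) {m : ℕ}
    (hm1 : q ≤ m) (hm2 : m < 2 * q) :
    (1 + ζ ^ m) * (1 + ∑ k ∈ Icc 1 (q - 1), ζ ^ (k * m) * lewyCoeff ζ k) = 0 := by
  simp only [mul_comm _ m, pow_mul]
  rw [one_add_sum_Icc_eq_lewySum hq]
  obtain ⟨r, rfl⟩ := Nat.exists_eq_add_of_le hm1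
  rw [pow_add, hζ.pow_eq_neg_one hq, neg_one_mul]
  rcases Nat.eq_zero_or_pos r with rfl | hr
  · simp
  · rw [hζ.lewySum_neg_pow_eq_zero hr.ne' (by omega), mul_zero]

end Lewy

/-- Lewy's lemma, Neumann case: with `ξ = e^{-iπ/q}`, `η(z) = (z+1)/(z-1)`, the
quantity `P(m) = (1 + ξ^m)(1 + Σ_{k=1}^{q-1} ξ^{km} ∏_{j=1}^k η(ξ^j))`
vanishes for all `q ≤ m ≤ 2q-1`. -/
theorem lewy_vanishing_neumann (q : ℕ) (hq : 1 ≤ q)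
    (ξ : ℂ) (hξ : ξ = Complex.exp (-(Real.pi * Complex.I) / q))
    (η : ℂ → ℂ) (hη : ∀ z, η z = (z + 1) / (z - 1))
    (m : ℕ) (hm1 : q ≤ m) (hm2 : m ≤ 2 * q - 1) :
    (1 + ξ ^ m) *
        (1 + ∑ k ∈ Finset.Icc 1 (q - 1),
            ξ ^ (k * m) * ∏ j ∈ Finset.Icc 1 k, η (ξ ^ j)) = 0 := by
  have hprim : IsPrimitiveRoot ξ (2 * q) := by
    have hexp : ξ = (exp (2 * Real.pi * I / (2 * q : ℕ)))⁻¹ := by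
      rw [hξ, ← exp_neg]
      congr 1
      push_cast
      field_simp
    exact hexp ▸ (isPrimitiveRoot_exp (2 * q) (by omega)).inv
  simp only [hη]
  exact hprim.lewy_vanishing (by omega) hm1 (by omega)
end

section
/- The nonzero eigenvalues (counted with multiplicity) of the Neumann problem (-1)^q U^{(2q)} = Λ^{2q} U, U^{(m)}(0) = U^{(m)}(1) = 0 for m = q,...,2q-1, coincide with the eigenvalues of the Dirichlet problem with boundary conditions U^{(m)}(0) = U^{(m)}(1) = 0 for m = 0,...,q-1. Moreover the Dirichlet problem has trivial kernel while the Neumann kernel has dimension q. -/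
/-!
Differentiating `q` times commutes with the equation `U⁽²ᵠ⁾ = (-1)ᵠ μ U`, and it carries the
Neumann conditions onto the Dirichlet ones; conversely, the Neumann conditions of order `m` for
`U⁽ᵠ⁾` are the Dirichlet conditions of order `m - q` for `U⁽²ᵠ⁾ = (-1)ᵠ μ U`. Both composites are
`U ↦ U⁽²ᵠ⁾ = (-1)ᵠ μ U`, so for `μ ≠ 0` the `q`-th derivative is an isomorphism.

For `μ = 0` the solutions are the polynomials of degree `< 2q`. A Dirichlet one has roots of order
`q` at `0` and at `1`, hence vanishes. For a Neumann one, `U⁽ᵠ⁾` has degree `< q` and vanishing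
`(q-1)`-jet at `0`, hence vanishes, so the kernel is the `q`-dimensional space of polynomials of
degree `< q`.
-/

open Complex

private lemma iteratedDeriv_add' {n : ℕ} {U V : ℝ → ℂ} (hU : ContDiff ℝ (⊤ : ℕ∞) U)
    (hV : ContDiff ℝ (⊤ : ℕ∞) V) (x : ℝ) :
    iteratedDeriv n (U + V) x = iteratedDeriv n U x + iteratedDeriv n V x := by
  simp only [← iteratedDerivWithin_univ]
  exact iteratedDerivWithin_add (Set.mem_univ x) uniqueDiffOn_univ
    ((hU.of_le (by exact_mod_cast le_top) : ContDiff ℝ n U).contDiffWithinAt)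
    ((hV.of_le (by exact_mod_cast le_top) : ContDiff ℝ n V).contDiffWithinAt)

private lemma iteratedDeriv_smul' {n : ℕ} {U : ℝ → ℂ} (hU : ContDiff ℝ (⊤ : ℕ∞) U)
    (c : ℂ) (x : ℝ) :
    iteratedDeriv n (c • U) x = c • iteratedDeriv n U x := by
  simp only [← iteratedDerivWithin_univ]
  exact iteratedDerivWithin_const_smul (Set.mem_univ x) uniqueDiffOn_univ c
    ((hU.of_le (by exact_mod_cast le_top) : ContDiff ℝ n U).contDiffWithinAt)

private lemma iteratedDeriv_zero_fun' {n : ℕ} (x : ℝ) :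
    iteratedDeriv n (0 : ℝ → ℂ) x = 0 := by
  rw [iteratedDeriv_eq_iteratedFDeriv]
  have : (iteratedFDeriv ℝ n fun _ : ℝ ↦ (0 : ℂ)) = 0 := iteratedFDeriv_zero_fun
  simp only [Pi.zero_def] at this ⊢
  rw [this]
  rfl

/-- The eigenspace of the Dirichlet problem
`(-1)^q U^{(2q)} = μ U`, `U^{(m)}(0) = U^{(m)}(1) = 0` for `m = 0, …, q-1`. -/
noncomputable def dirichletEigenspace (q : ℕ) (μ : ℂ) : Submodule ℂ (ℝ → ℂ) where
  carrier := {U | ContDiff ℝ (⊤ : ℕ∞) U ∧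
    (∀ x : ℝ, (-1 : ℂ) ^ q * iteratedDeriv (2 * q) U x = μ * U x) ∧
    ∀ m : ℕ, m < q → iteratedDeriv m U 0 = 0 ∧ iteratedDeriv m U 1 = 0}
  add_mem' := by
    rintro U V ⟨hU, hUo, hUb⟩ ⟨hV, hVo, hVb⟩
    refine ⟨hU.add hV, fun x => ?_, fun m hm => ?_⟩
    · simp only [iteratedDeriv_add' hU hV, Pi.add_apply, mul_add, hUo x, hVo x]
    · constructor <;> rw [iteratedDeriv_add' hU hV] <;>
        simp [(hUb m hm).1, (hUb m hm).2, (hVb m hm).1, (hVb m hm).2]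
  zero_mem' := by
    refine ⟨contDiff_const, fun x => ?_, fun m hm => ?_⟩
    · simp [iteratedDeriv_zero_fun']
    · simp [iteratedDeriv_zero_fun']
  smul_mem' := by
    rintro c U ⟨hU, hUo, hUb⟩
    refine ⟨hU.const_smul c, fun x => ?_, fun m hm => ?_⟩
    · rw [iteratedDeriv_smul' hU, Pi.smul_apply, smul_eq_mul, smul_eq_mul]
      calc (-1 : ℂ) ^ q * (c * iteratedDeriv (2 * q) U x)
          = c * ((-1 : ℂ) ^ q * iteratedDeriv (2 * q) U x) := by ring
        _ = c * (μ * U x) := by rw [hUo x]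
        _ = μ * (c * U x) := by ring
    · constructor <;> rw [iteratedDeriv_smul' hU] <;>
        simp [(hUb m hm).1, (hUb m hm).2]

/-- The eigenspace of the Neumann problem
`(-1)^q U^{(2q)} = μ U`, `U^{(m)}(0) = U^{(m)}(1) = 0` for `m = q, …, 2q-1`. -/
noncomputable def neumannEigenspace (q : ℕ) (μ : ℂ) : Submodule ℂ (ℝ → ℂ) where
  carrier := {U | ContDiff ℝ (⊤ : ℕ∞) U ∧
    (∀ x : ℝ, (-1 : ℂ) ^ q * iteratedDeriv (2 * q) U x = μ * U x) ∧
    ∀ m : ℕ, q ≤ m → m < 2 * q → iteratedDeriv m U 0 = 0 ∧ iteratedDeriv m U 1 = 0}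
  add_mem' := by
    rintro U V ⟨hU, hUo, hUb⟩ ⟨hV, hVo, hVb⟩
    refine ⟨hU.add hV, fun x => ?_, fun m hm hm' => ?_⟩
    · simp only [iteratedDeriv_add' hU hV, Pi.add_apply, mul_add, hUo x, hVo x]
    · constructor <;> rw [iteratedDeriv_add' hU hV] <;>
        simp [(hUb m hm hm').1, (hUb m hm hm').2, (hVb m hm hm').1, (hVb m hm hm').2]
  zero_mem' := by
    refine ⟨contDiff_const, fun x => ?_, fun m hm hm' => ?_⟩
    · simp [iteratedDeriv_zero_fun']
    · simp [iteratedDeriv_zero_fun']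
  smul_mem' := by
    rintro c U ⟨hU, hUo, hUb⟩
    refine ⟨hU.const_smul c, fun x => ?_, fun m hm hm' => ?_⟩
    · rw [iteratedDeriv_smul' hU, Pi.smul_apply, smul_eq_mul, smul_eq_mul]
      calc (-1 : ℂ) ^ q * (c * iteratedDeriv (2 * q) U x)
          = c * ((-1 : ℂ) ^ q * iteratedDeriv (2 * q) U x) := by ring
        _ = c * (μ * U x) := by rw [hUo x]
        _ = μ * (c * U x) := by ring
    · constructor <;> rw [iteratedDeriv_smul' hU] <;>
        simp [(hUb m hm hm').1, (hUb m hm hm').2]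

open Polynomial

section IteratedDeriv

variable {𝕜 : Type*} {F : Type*} [NormedAddCommGroup F]

theorem iteratedDeriv_iteratedDeriv [NontriviallyNormedField 𝕜] [NormedSpace 𝕜 F]
    (m n : ℕ) (f : 𝕜 → F) :
    iteratedDeriv m (iteratedDeriv n f) = iteratedDeriv (m + n) f := by
  simp only [iteratedDeriv_eq_iterate, ← Function.iterate_add_apply]

theorem ContDiff.iteratedDeriv [NontriviallyNormedField 𝕜] [NormedSpace 𝕜 F]
    {f : 𝕜 → F} (hf : ContDiff 𝕜 (⊤ : ℕ∞) f) (n : ℕ) :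
    ContDiff 𝕜 (⊤ : ℕ∞) (iteratedDeriv n f) := by
  rw [iteratedDeriv_eq_iterate]
  exact hf.iterate_deriv n

theorem eq_zero_of_iteratedDeriv_eq_zero [RCLike 𝕜] [NormedSpace 𝕜 F] {n : ℕ} {f : 𝕜 → F}
    (hf : ContDiff 𝕜 n f) (hn : iteratedDeriv n f = 0) (a : 𝕜)
    (ha : ∀ k < n, iteratedDeriv k f a = 0) : f = 0 := by
  induction n generalizing f with
  | zero => simpa using hn
  | succ n ih =>
    rw [Nat.cast_add_one, contDiff_succ_iff_deriv] at hf
    have hderiv : deriv f = 0 :=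
      ih hf.2.2 (by rwa [← iteratedDeriv_succ'])
        fun k hk => by simpa [← iteratedDeriv_succ'] using ha (k + 1) (by omega)
    funext x
    rw [is_const_of_deriv_eq_zero hf.1 (congrFun hderiv) x a]
    simpa using ha 0 n.succ_pos

end IteratedDeriv

section PolynomialFunctions

theorem contDiff_eval_ofReal (P : ℂ[X]) (n : WithTop ℕ∞) :
    ContDiff ℝ n fun x : ℝ => P.eval (x : ℂ) := by
  have h := ((P.contDiff_aeval n).restrict_scalars ℝ).comp ofRealCLM.contDiff
  simp only [Function.comp_def, ofRealCLM_apply, coe_aeval_eq_eval] at h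
  exact h

theorem iteratedDeriv_eval_ofReal (P : ℂ[X]) (n : ℕ) :
    iteratedDeriv n (fun x : ℝ => P.eval (x : ℂ)) =
      fun x : ℝ => (derivative^[n] P).eval (x : ℂ) := by
  induction n generalizing P with
  | zero => simp
  | succ n ih =>
    rw [iteratedDeriv_succ', Function.iterate_succ_apply, ← ih]
    congr 1
    funext x
    exact ((P.hasDerivAt (x : ℂ)).comp_ofReal).deriv

theorem Polynomial.eval_zero_iterate_derivative {R : Type*} [CommSemiring R] (P : R[X]) (k : ℕ) :
    (derivative^[k] P).eval 0 = k.factorial * P.coeff k := by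
  rw [← coeff_zero_eq_eval_zero, coeff_iterate_derivative, zero_add, Nat.descFactorial_self,
    nsmul_eq_mul]

theorem exists_mem_degreeLT_of_iteratedDeriv_eq_zero {n : ℕ} {U : ℝ → ℂ} (hU : ContDiff ℝ n U)
    (hn : iteratedDeriv n U = 0) : ∃ P ∈ degreeLT ℂ n, U = fun x : ℝ => P.eval (x : ℂ) := by
  set P : ℂ[X] := ∑ k ∈ Finset.range n, monomial k (iteratedDeriv k U 0 / k.factorial) with hP_def
  have hP : P ∈ degreeLT ℂ n := Submodule.sum_mem _ fun k hk =>
    mem_degreeLT.2 <| (degree_monomial_le _ _).trans_lt <| by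
      exact_mod_cast Finset.mem_range.1 hk
  have hPk : ∀ k < n, (derivative^[k] P).eval 0 = iteratedDeriv k U 0 := fun k hk => by
    rw [eval_zero_iterate_derivative, hP_def, finsetSum_coeff]
    simp only [coeff_monomial, Finset.sum_ite_eq', Finset.mem_range, hk, if_true]
    exact mul_div_cancel₀ _ (Nat.cast_ne_zero.2 k.factorial_ne_zero)
  refine ⟨P, hP, sub_eq_zero.1 <|
    eq_zero_of_iteratedDeriv_eq_zero (hU.sub (contDiff_eval_ofReal P n)) ?_ 0 fun k hk => ?_⟩
  · funext x
    rw [iteratedDeriv_sub hU.contDiffAt (contDiff_eval_ofReal P n).contDiffAt, hn,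
      iteratedDeriv_eval_ofReal, iterate_derivative_eq_zero_of_degree_lt (mem_degreeLT.1 hP)]
    simp
  · have hkn : (k : WithTop ℕ∞) ≤ n := by exact_mod_cast hk.le
    rw [iteratedDeriv_sub (hU.of_le hkn).contDiffAt (contDiff_eval_ofReal P k).contDiffAt,
      iteratedDeriv_eval_ofReal]
    simp [hPk k hk]

end PolynomialFunctions

section RootMultiplicity

variable {K : Type*} [Field K] [CharZero K]

theorem Polynomial.X_sub_C_pow_dvd_of_iterate_derivative_eval_eq_zero {P : K[X]} {a : K} {n : ℕ}
    (h : ∀ k < n, (derivative^[k] P).eval a = 0) : (X - C a) ^ n ∣ P := by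
  rcases eq_or_ne P 0 with rfl | hP
  · exact dvd_zero _
  rcases n with _ | n
  · simp
  exact (le_rootMultiplicity_iff hP).1 <|
    lt_rootMultiplicity_of_isRoot_iterate_derivative hP fun k hk => h k (by omega)

theorem Polynomial.eq_zero_of_iterate_derivative_eval_eq_zero {P : K[X]} {a b : K} (hab : a ≠ b)
    {m n : ℕ} (hP : P.degree < ↑(m + n)) (ha : ∀ k < m, (derivative^[k] P).eval a = 0)
    (hb : ∀ k < n, (derivative^[k] P).eval b = 0) : P = 0 := by
  have hcop : IsCoprime ((X - C a) ^ m) ((X - C b) ^ n) :=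
    (isCoprime_X_sub_C_of_isUnit_sub (sub_ne_zero.2 hab).isUnit).pow
  refine eq_zero_of_dvd_of_degree_lt (hcop.mul_dvd
    (X_sub_C_pow_dvd_of_iterate_derivative_eval_eq_zero ha)
    (X_sub_C_pow_dvd_of_iterate_derivative_eval_eq_zero hb)) ?_
  simpa [degree_mul, degree_pow] using hP

end RootMultiplicity

noncomputable def evalOfRealₗ : ℂ[X] →ₗ[ℂ] (ℝ → ℂ) :=
  LinearMap.pi fun x : ℝ => leval (x : ℂ)

theorem evalOfRealₗ_apply (P : ℂ[X]) : evalOfRealₗ P = fun x : ℝ => P.eval (x : ℂ) := rfl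

theorem evalOfRealₗ_injective : Function.Injective evalOfRealₗ := by
  refine (injective_iff_map_eq_zero _).2 fun P hP => P.eq_zero_of_infinite_isRoot ?_
  exact Set.infinite_of_injective_forall_mem ofReal_injective fun x : ℝ => congrFun hP x

section Eigenspaces

variable {q : ℕ} {μ c : ℂ} {U : ℝ → ℂ}

theorem forall_neg_one_pow_mul_iteratedDeriv_eq_iff :
    (∀ x, (-1 : ℂ) ^ q * iteratedDeriv (2 * q) U x = μ * U x) ↔
      iteratedDeriv (2 * q) U = ((-1 : ℂ) ^ q * μ) • U := by
  have hsq : ((-1 : ℂ) ^ q) * (-1) ^ q = 1 := by rw [← mul_pow]; norm_num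
  simp only [funext_iff, Pi.smul_apply, smul_eq_mul]
  refine forall_congr' fun x => ⟨fun h => ?_, fun h => ?_⟩
  · linear_combination (-1 : ℂ) ^ q * h - iteratedDeriv (2 * q) U x * hsq
  · linear_combination (-1 : ℂ) ^ q * h + μ * U x * hsq

theorem iteratedDeriv_add_eq_smul {n : ℕ} (h : iteratedDeriv n U = c • U) (k : ℕ) :
    iteratedDeriv (k + n) U = c • iteratedDeriv k U := by
  funext x
  rw [← iteratedDeriv_iteratedDeriv, h, iteratedDeriv_const_smul_field, Pi.smul_apply]

theorem iteratedDeriv_mem_neumannEigenspace (hU : U ∈ dirichletEigenspace q μ) :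
    iteratedDeriv q U ∈ neumannEigenspace q μ := by
  obtain ⟨hsmooth, hode, hbc⟩ := hU
  have h2q := forall_neg_one_pow_mul_iteratedDeriv_eq_iff.1 hode
  refine ⟨hsmooth.iteratedDeriv q, forall_neg_one_pow_mul_iteratedDeriv_eq_iff.2 ?_,
    fun m hqm hm => ?_⟩
  · rw [iteratedDeriv_iteratedDeriv, add_comm, iteratedDeriv_add_eq_smul h2q]
  · rw [iteratedDeriv_iteratedDeriv, show m + q = m - q + 2 * q by omega,
      iteratedDeriv_add_eq_smul h2q]
    simp [hbc (m - q) (by omega)]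

theorem iteratedDeriv_mem_dirichletEigenspace (hU : U ∈ neumannEigenspace q μ) :
    iteratedDeriv q U ∈ dirichletEigenspace q μ := by
  obtain ⟨hsmooth, hode, hbc⟩ := hU
  have h2q := forall_neg_one_pow_mul_iteratedDeriv_eq_iff.1 hode
  refine ⟨hsmooth.iteratedDeriv q, forall_neg_one_pow_mul_iteratedDeriv_eq_iff.2 ?_,
    fun m hm => ?_⟩
  · rw [iteratedDeriv_iteratedDeriv, add_comm, iteratedDeriv_add_eq_smul h2q]
  · rw [iteratedDeriv_iteratedDeriv]
    exact hbc (m + q) (by omega) (by omega)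

theorem iteratedDeriv_iteratedDeriv_self_eq_smul
    (h : ∀ x, (-1 : ℂ) ^ q * iteratedDeriv (2 * q) U x = μ * U x) :
    iteratedDeriv q (iteratedDeriv q U) = ((-1 : ℂ) ^ q * μ) • U := by
  rw [iteratedDeriv_iteratedDeriv, ← two_mul, forall_neg_one_pow_mul_iteratedDeriv_eq_iff.1 h]

theorem iteratedDeriv_two_mul_eq_zero
    (h : ∀ x, (-1 : ℂ) ^ q * iteratedDeriv (2 * q) U x = 0 * U x) :
    iteratedDeriv (2 * q) U = 0 := by
  simpa using forall_neg_one_pow_mul_iteratedDeriv_eq_iff.1 h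

end Eigenspaces

noncomputable def iteratedDerivₗ (n : ℕ) {S T : Submodule ℂ (ℝ → ℂ)}
    (hS : ∀ U ∈ S, ContDiff ℝ n U) (hST : ∀ U ∈ S, iteratedDeriv n U ∈ T) : S →ₗ[ℂ] T where
  toFun U := ⟨iteratedDeriv n U, hST U U.2⟩
  map_add' U V := Subtype.ext <| funext fun _ =>
    iteratedDeriv_add (hS U U.2).contDiffAt (hS V V.2).contDiffAt
  map_smul' c U := Subtype.ext <| funext fun _ => iteratedDeriv_const_smul_field c (U : ℝ → ℂ)

theorem iteratedDerivₗ_apply (n : ℕ) {S T : Submodule ℂ (ℝ → ℂ)}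
    (hS : ∀ U ∈ S, ContDiff ℝ n U) (hST : ∀ U ∈ S, iteratedDeriv n U ∈ T) (U : S) :
    (iteratedDerivₗ n hS hST U : ℝ → ℂ) = iteratedDeriv n U := rfl

noncomputable def dirichletNeumannEquiv (q : ℕ) {μ : ℂ} (hμ : μ ≠ 0) :
    dirichletEigenspace q μ ≃ₗ[ℂ] neumannEigenspace q μ :=
  have hc : (-1 : ℂ) ^ q * μ ≠ 0 := mul_ne_zero (pow_ne_zero _ (by norm_num)) hμ
  LinearEquiv.ofLinearMap
    (iteratedDerivₗ q (S := dirichletEigenspace q μ) (fun _ hU => contDiff_infty.1 hU.1 q)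
      fun _ => iteratedDeriv_mem_neumannEigenspace)
    (((-1 : ℂ) ^ q * μ)⁻¹ • iteratedDerivₗ q (S := neumannEigenspace q μ)
      (fun _ hU => contDiff_infty.1 hU.1 q) fun _ => iteratedDeriv_mem_dirichletEigenspace)
    (by
      ext U x
      simp only [LinearMap.comp_apply, LinearMap.smul_apply, LinearMap.id_apply,
        Submodule.coe_smul, iteratedDerivₗ_apply]
      rw [iteratedDeriv_const_smul_field, iteratedDeriv_iteratedDeriv_self_eq_smul U.2.2.1,
        Pi.smul_apply, inv_smul_smul₀ hc])
    (by
      ext U x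
      simp only [LinearMap.comp_apply, LinearMap.smul_apply, LinearMap.id_apply,
        Submodule.coe_smul, iteratedDerivₗ_apply]
      rw [iteratedDeriv_iteratedDeriv_self_eq_smul U.2.2.1, inv_smul_smul₀ hc])

theorem dirichletEigenspace_zero (q : ℕ) : dirichletEigenspace q 0 = ⊥ := by
  refine eq_bot_iff.2 fun U ⟨hsmooth, hode, hbc⟩ => ?_
  obtain ⟨P, hP, rfl⟩ := exists_mem_degreeLT_of_iteratedDeriv_eq_zero
    (contDiff_infty.1 hsmooth _) (iteratedDeriv_two_mul_eq_zero hode)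
  have hP0 : P = 0 := by
    refine eq_zero_of_iterate_derivative_eval_eq_zero zero_ne_one
      (by rw [← two_mul]; exact mem_degreeLT.1 hP) (fun k hk => ?_) (fun k hk => ?_)
    · simpa [iteratedDeriv_eval_ofReal] using (hbc k hk).1
    · simpa [iteratedDeriv_eval_ofReal] using (hbc k hk).2
  simp [hP0, Pi.zero_def]

theorem neumannEigenspace_zero (q : ℕ) :
    neumannEigenspace q 0 = (degreeLT ℂ q).map evalOfRealₗ := by
  apply le_antisymm
  · rintro U ⟨hsmooth, hode, hbc⟩
    have hUq : iteratedDeriv q U = 0 := by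
      refine eq_zero_of_iteratedDeriv_eq_zero (contDiff_infty.1 (hsmooth.iteratedDeriv q) q) ?_ 0
        fun k hk => ?_
      · rw [iteratedDeriv_iteratedDeriv, ← two_mul, iteratedDeriv_two_mul_eq_zero hode]
      · rw [iteratedDeriv_iteratedDeriv]
        exact (hbc (k + q) (by omega) (by omega)).1
    obtain ⟨P, hP, rfl⟩ := exists_mem_degreeLT_of_iteratedDeriv_eq_zero
      (contDiff_infty.1 hsmooth _) hUq
    exact ⟨P, hP, rfl⟩
  · rintro _ ⟨P, hP, rfl⟩
    have hvanish : ∀ m, q ≤ m → iteratedDeriv m (evalOfRealₗ P) = 0 := fun m hm => by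
      rw [evalOfRealₗ_apply, iteratedDeriv_eval_ofReal, iterate_derivative_eq_zero_of_degree_lt
        ((mem_degreeLT.1 hP).trans_le (by exact_mod_cast hm))]
      simp [Pi.zero_def]
    refine ⟨contDiff_eval_ofReal P _, fun x => ?_, fun m hqm _ => ?_⟩
    · simp [hvanish (2 * q) (by omega)]
    · simp [hvanish m hqm]

theorem finrank_neumannEigenspace_zero (q : ℕ) :
    Module.finrank ℂ (neumannEigenspace q 0) = q := by
  rw [neumannEigenspace_zero,
    ← (Submodule.equivMapOfInjective _ evalOfRealₗ_injective _).finrank_eq,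
    (degreeLTEquiv ℂ q).finrank_eq, Module.finrank_fin_fun]

theorem dirichlet_neumann_spectra_general (q : ℕ) :
    (∀ μ : ℂ, μ ≠ 0 →
      Nonempty (dirichletEigenspace q μ ≃ₗ[ℂ] neumannEigenspace q μ)) ∧
    dirichletEigenspace q 0 = ⊥ ∧
    Module.finrank ℂ (neumannEigenspace q 0) = q :=
  ⟨fun _ hμ => ⟨dirichletNeumannEquiv q hμ⟩, dirichletEigenspace_zero q,
    finrank_neumannEigenspace_zero q⟩

/-- The nonzero eigenvalues of the Neumann problem coincide with those of the
Dirichlet problem, with multiplicity (there is a linear isomorphism between the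
eigenspaces for every nonzero eigenvalue `μ`); the Dirichlet kernel is trivial
while the Neumann kernel has dimension `q`. -/
theorem dirichlet_neumann_spectra (q : ℕ) (hq : 1 ≤ q) :
    (∀ μ : ℂ, μ ≠ 0 →
      Nonempty (dirichletEigenspace q μ ≃ₗ[ℂ] neumannEigenspace q μ)) ∧
    dirichletEigenspace q 0 = ⊥ ∧
    Module.finrank ℂ (neumannEigenspace q 0) = q :=
  dirichlet_neumann_spectra_general q
end

section
/- Let {w_j}_{j≥N} and {W_j}_{j≥N} be two sequences of unit vectors in a Hilbert space H such that {W_j}_{j≥N} is orthonormal with orthogonal complement of its closed span having finite dimension N-1, and such that Σ_{j≥N} ‖w_j - W_j‖² < 1. Let X be the closed span of {w_j}_{j≥N} and X* the closed span of {W_j}_{j≥N}. Then dim X^⊥ = dim (X*)^⊥ = N - 1. -/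
open Submodule

open scoped RealInnerProductSpace

/-- Membership in the orthogonal complement of the span of a range. -/
lemma mem_orthogonal_span_range_iff
    {H : Type*} [NormedAddCommGroup H] [InnerProductSpace ℝ H]
    (w : ℕ → H) (z : H) :
    z ∈ (Submodule.span ℝ (Set.range w))ᗮ ↔ ∀ j, ⟪w j, z⟫ = 0 := by
  rw [Submodule.mem_orthogonal]
  constructor
  · intro h j
    exact h (w j) (Submodule.subset_span (Set.mem_range_self j))
  · intro h u hu
    induction hu using Submodule.span_induction with
    | mem x hx => obtain ⟨j, rfl⟩ := hx; exact h j
    | zero => simp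
    | add x y _ _ hx hy => rw [inner_add_left, hx, hy, add_zero]
    | smul c x _ hx => rw [inner_smul_left, hx, mul_zero]

/-- Bary–Krein type lemma: if `{W_j}` is an orthonormal sequence of unit
vectors whose closed span has orthogonal complement of dimension `N - 1`, and
`{w_j}` is a sequence of unit vectors with `Σ_j ‖w_j - W_j‖² < 1`, then the
orthogonal complement of the closed span of `{w_j}` also has dimension `N-1`. -/
theorem bary_krein
    {H : Type*} [NormedAddCommGroup H] [InnerProductSpace ℝ H] [CompleteSpace H]
    (N : ℕ) (hN : 1 ≤ N) (w W : ℕ → H)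
    (hw : ∀ j, ‖w j‖ = 1) (hW : Orthonormal ℝ W)
    (hWfin : FiniteDimensional ℝ ((Submodule.span ℝ (Set.range W))ᗮ))
    (hWdim : Module.finrank ℝ ((Submodule.span ℝ (Set.range W))ᗮ) = N - 1)
    (hsum : Summable fun j => ‖w j - W j‖ ^ 2)
    (hsum1 : (∑' j, ‖w j - W j‖ ^ 2) < 1) :
    FiniteDimensional ℝ ((Submodule.span ℝ (Set.range w))ᗮ) ∧
    Module.finrank ℝ ((Submodule.span ℝ (Set.range w))ᗮ) = N - 1 := by
  classical
  set c : ℝ := ∑' j, ‖w j - W j‖ ^ 2 with hc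
  have hc0 : 0 ≤ c := tsum_nonneg fun j => by positivity
  set D : ℕ → H := fun j => W j - w j with hD
  have hDnorm : ∀ j, ‖D j‖ = ‖w j - W j‖ := fun j => norm_sub_rev _ _
  -- summability of the series defining K
  have hsummable : ∀ x : H, Summable fun j => ‖(⟪W j, x⟫ : ℝ) • D j‖ := by
    intro x
    have h1 : Summable fun j => ‖(⟪W j, x⟫ : ℝ)‖ ^ 2 := hW.inner_products_summable x
    refine Summable.of_nonneg_of_le (fun j => norm_nonneg _)
      (fun j => ?_) ((h1.add hsum).div_const 2)
    rw [norm_smul, hDnorm]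
    have := two_mul_le_add_sq ‖(⟪W j, x⟫ : ℝ)‖ ‖w j - W j‖
    have hnn : 0 ≤ ‖(⟪W j, x⟫ : ℝ)‖ * ‖w j - W j‖ :=
      mul_nonneg (norm_nonneg _) (norm_nonneg _)
    nlinarith [this]
  have hsummable' : ∀ x : H, Summable fun j => (⟪W j, x⟫ : ℝ) • D j :=
    fun x => (hsummable x).of_norm
  -- norm bound for the series
  have hbound : ∀ x : H, ‖∑' j, (⟪W j, x⟫ : ℝ) • D j‖ ≤ Real.sqrt c * ‖x‖ := by
    intro x
    refine (norm_tsum_le_tsum_norm (hsummable x)).trans ?_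
    refine Summable.tsum_le_of_sum_le (hsummable x) fun s => ?_
    have key : (∑ j ∈ s, ‖(⟪W j, x⟫ : ℝ)‖ * ‖D j‖) ^ 2 ≤
        (∑ j ∈ s, ‖(⟪W j, x⟫ : ℝ)‖ ^ 2) * ∑ j ∈ s, ‖D j‖ ^ 2 :=
      Finset.sum_mul_sq_le_sq_mul_sq s _ _
    have h1 : (∑ j ∈ s, ‖(⟪W j, x⟫ : ℝ)‖ ^ 2) ≤ ‖x‖ ^ 2 := hW.sum_inner_products_le x
    have h2 : (∑ j ∈ s, ‖D j‖ ^ 2) ≤ c := by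
      simp only [hDnorm]
      exact Summable.sum_le_tsum s (fun j _ => by positivity) hsum
    have hnn : 0 ≤ ∑ j ∈ s, ‖(⟪W j, x⟫ : ℝ)‖ * ‖D j‖ :=
      Finset.sum_nonneg fun j _ => mul_nonneg (norm_nonneg _) (norm_nonneg _)
    calc ∑ j ∈ s, ‖(⟪W j, x⟫ : ℝ) • D j‖
        = ∑ j ∈ s, ‖(⟪W j, x⟫ : ℝ)‖ * ‖D j‖ := by
          simp [norm_smul]
      _ = Real.sqrt ((∑ j ∈ s, ‖(⟪W j, x⟫ : ℝ)‖ * ‖D j‖) ^ 2) := by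
          rw [Real.sqrt_sq hnn]
      _ ≤ Real.sqrt ((‖x‖ ^ 2) * c) := by
          refine Real.sqrt_le_sqrt (key.trans ?_)
          have hs2 : 0 ≤ ∑ j ∈ s, ‖D j‖ ^ 2 :=
            Finset.sum_nonneg fun j _ => by positivity
          have hs1 : 0 ≤ ∑ j ∈ s, ‖(⟪W j, x⟫ : ℝ)‖ ^ 2 :=
            Finset.sum_nonneg fun j _ => by positivity
          nlinarith
      _ = Real.sqrt c * ‖x‖ := by
          rw [Real.sqrt_mul (by positivity), Real.sqrt_sq (norm_nonneg _), mul_comm]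
  -- the linear map K
  let K₀ : H →ₗ[ℝ] H :=
    { toFun := fun x => ∑' j, (⟪W j, x⟫ : ℝ) • D j
      map_add' := by
        intro x y
        show (∑' j, (⟪W j, x + y⟫ : ℝ) • D j) = _
        rw [← Summable.tsum_add (hsummable' x) (hsummable' y)]
        exact tsum_congr fun j => by rw [inner_add_right, add_smul]
      map_smul' := by
        intro r x
        simp only [RingHom.id_apply]
        show (∑' j, (⟪W j, r • x⟫ : ℝ) • D j) = r • ∑' j, (⟪W j, x⟫ : ℝ) • D j
        rw [← tsum_const_smul'' r]
        exact tsum_congr fun j => by rw [inner_smul_right, smul_smul] }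
  let K : H →L[ℝ] H := K₀.mkContinuous (Real.sqrt c) hbound
  have hKnorm : ‖K‖ < 1 := by
    have h1 : ‖K‖ ≤ Real.sqrt c :=
      LinearMap.mkContinuous_norm_le K₀ (Real.sqrt_nonneg c) hbound
    have h2 : Real.sqrt c < 1 := by
      have := Real.sqrt_lt_sqrt hc0 hsum1
      rwa [Real.sqrt_one] at this
    linarith
  -- the unit T = 1 - K and its action on W j
  set u : (H →L[ℝ] H)ˣ := Units.oneSub K hKnorm with hu
  have hKW : ∀ j, K (W j) = D j := by
    intro j
    show (∑' i, (⟪W i, W j⟫ : ℝ) • D i) = D j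
    rw [tsum_eq_single j]
    · have : (⟪W j, W j⟫ : ℝ) = 1 := by
        simpa using orthonormal_iff_ite.mp hW j j
      rw [this, one_smul]
    · intro i hi
      rw [hW.2 hi, zero_smul]
  have hTW : ∀ j, (u : H →L[ℝ] H) (W j) = w j := by
    intro j
    rw [Units.val_oneSub]
    simp only [ContinuousLinearMap.sub_apply, ContinuousLinearMap.one_apply, hKW, hD]
    abel
  -- the adjoint equivalence
  set e : H ≃L[ℝ] H := ContinuousLinearEquiv.ofUnit (star u) with he
  have heApply : ∀ z : H, e z = ContinuousLinearMap.adjoint (u : H →L[ℝ] H) z := by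
    intro z
    show ((star u : (H →L[ℝ] H)ˣ) : H →L[ℝ] H) z = _
    rw [Units.coe_star, ContinuousLinearMap.star_eq_adjoint]
  have hkey : ∀ (z : H) (j : ℕ), ⟪W j, e z⟫ = ⟪w j, z⟫ := by
    intro z j
    rw [heApply, real_inner_comm, ContinuousLinearMap.adjoint_inner_left, hTW,
      real_inner_comm]
  -- the orthogonal complements correspond under e
  have hcorr : (Submodule.span ℝ (Set.range w))ᗮ =
      Submodule.map ((e.symm.toLinearEquiv : H ≃ₗ[ℝ] H) : H →ₗ[ℝ] H) (Submodule.span ℝ (Set.range W))ᗮ := by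
    ext z
    rw [Submodule.mem_map_equiv (e := e.symm.toLinearEquiv)]
    rw [mem_orthogonal_span_range_iff, mem_orthogonal_span_range_iff]
    have hz : e.symm.toLinearEquiv.symm z = e z := rfl
    constructor
    · intro h j
      rw [hz, hkey]
      exact h j
    · intro h j
      have := h j
      rw [hz, hkey] at this
      exact this
  have equiv : ((Submodule.span ℝ (Set.range W))ᗮ) ≃ₗ[ℝ]
      ((Submodule.span ℝ (Set.range w))ᗮ) := by
    rw [hcorr]
    exact e.symm.toLinearEquiv.submoduleMap _
  constructor
  · exact Module.Finite.equiv equiv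
  · rw [← hWdim]
    exact equiv.symm.finrank_eq
end

section
/- Let q ≥ 2 be even and ω = e^{iπ/(2q)}. Define the Vandermonde ratios R_B = det V(ω^{-(q+1)}, ω^{-(q-1)}, ω^{q-3}, ..., ω^1, ω^{-1}) / det V(ω^{q-1}, ω^{-(q-1)}, ..., ω^1, ω^{-1}) and R_A = det V(ω^{2q-1}, ω^{-(2q-1)}, ..., ω^{q+1}, ω^{q-1}) / det V(ω^{2q-1}, ω^{-(2q-1)}, ..., ω^{q+1}, ω^{-(q+1)}), where in each case only the indicated single node is changed. Then R_A = R_B. -/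
open Complex Matrix

lemma vand_neg_rev {n : ℕ} (v : Fin n → ℂ) :
    (Matrix.vandermonde (fun i => - v i.rev)).det = (Matrix.vandermonde v).det := by
  rw [Matrix.det_vandermonde, Matrix.det_vandermonde,
    Finset.prod_sigma', Finset.prod_sigma']
  refine Finset.prod_nbij' (fun p => ⟨p.2.rev, p.1.rev⟩) (fun p => ⟨p.2.rev, p.1.rev⟩)
    ?_ ?_ ?_ ?_ ?_
  · rintro ⟨i, j⟩ h
    simp only [Finset.mem_sigma, Finset.mem_univ, Finset.mem_Ioi, true_and] at h ⊢
    exact Fin.rev_lt_rev.mpr h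
  · rintro ⟨i, j⟩ h
    simp only [Finset.mem_sigma, Finset.mem_univ, Finset.mem_Ioi, true_and] at h ⊢
    exact Fin.rev_lt_rev.mpr h
  · rintro ⟨i, j⟩ _; simp [Fin.rev_rev]
  · rintro ⟨i, j⟩ _; simp [Fin.rev_rev]
  · rintro ⟨i, j⟩ _; simp; ring

/-- The Vandermonde determinant identity `det V(a')·det V(b) = det V(a)·det V(b')`
from Naimark's regularity computation: with `ω = e^{iπ/(2q)}` (`q ≥ 2` even),
nodes `a = (ω^{2q-1}, ω^{-(2q-1)}, …, ω^{q+1}, ω^{-(q+1)})` and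
`b = (ω^{q-1}, ω^{-(q-1)}, …, ω^1, ω^{-1})`, `a'` obtained from `a` by replacing
its last node `ω^{-(q+1)}` by `ω^{q-1}`, and `b'` obtained from `b` by replacing
its first node `ω^{q-1}` by `ω^{-(q+1)}`. -/
theorem naimark_vandermonde_identity (q : ℕ) (hq : 2 ≤ q) (hqe : Even q)
    (ω : ℂ) (hω : ω = Complex.exp (Real.pi * Complex.I / (2 * q)))
    (a b : Fin q → ℂ)
    (ha : ∀ i : Fin q,
      a i = ω ^ ((-1 : ℤ) ^ (i : ℕ) * (2 * (q : ℤ) - 1 - 2 * (((i : ℕ) / 2 : ℕ) : ℤ))))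
    (hb : ∀ i : Fin q,
      b i = ω ^ ((-1 : ℤ) ^ (i : ℕ) * ((q : ℤ) - 1 - 2 * (((i : ℕ) / 2 : ℕ) : ℤ)))) :
    (Matrix.vandermonde
        (Function.update a ⟨q - 1, by omega⟩ (ω ^ ((q : ℤ) - 1)))).det *
      (Matrix.vandermonde b).det
    = (Matrix.vandermonde a).det *
      (Matrix.vandermonde
        (Function.update b ⟨0, by omega⟩ (ω ^ (-((q : ℤ) + 1))))).det := by
  obtain ⟨m, hm⟩ := hqe
  have hω0 : ω ≠ 0 := by rw [hω]; exact Complex.exp_ne_zero _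
  have hω2q : ω ^ (2 * q) = -1 := by
    rw [hω, ← Complex.exp_nat_mul]
    rw [show ((2 * q : ℕ) : ℂ) * (Real.pi * Complex.I / (2 * q)) = Real.pi * Complex.I by
      have : (2 * q : ℂ) ≠ 0 := by
        simp only [ne_eq, mul_eq_zero, OfNat.ofNat_ne_zero, Nat.cast_eq_zero, false_or]
        omega
      push_cast
      field_simp
      exact div_self (Nat.cast_ne_zero.mpr (by omega))]
    exact Complex.exp_pi_mul_I
  have hkey : ∀ k : ℤ, ω ^ (k + 2 * q) = - ω ^ k := by
    intro k
    rw [zpow_add₀ hω0, show ((2 : ℤ) * q) = ((2 * q : ℕ) : ℤ) by push_cast; ring,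
      zpow_natCast, hω2q]
    ring
  have hmod : ∀ x y : ℤ, x = y + 4 * q → ω ^ x = ω ^ y := by
    intro x y h
    rw [h, show y + (4 : ℤ) * q = (y + 2 * q) + 2 * q by ring, hkey, hkey]
    ring
  -- the pointwise relation a i = - b i.rev
  have hab : ∀ i : Fin q, a i = - b i.rev := by
    intro i
    rw [ha, hb]
    have hilt : (i : ℕ) < q := i.isLt
    have hrev : (i.rev : ℕ) = q - ((i : ℕ) + 1) := Fin.val_rev i
    rcases Nat.even_or_odd (i : ℕ) with ⟨k, hk⟩ | ⟨k, hk⟩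
    · have h1 : ((i : ℕ) / 2) = k := by omega
      have h2 : ((i.rev : ℕ) / 2) = m - 1 - k := by omega
      have hsgn1 : ((-1 : ℤ)) ^ (i : ℕ) = 1 := Even.neg_one_pow ⟨k, hk⟩
      have hsgn2 : ((-1 : ℤ)) ^ (i.rev : ℕ) = -1 := Odd.neg_one_pow ⟨m - 1 - k, by omega⟩
      rw [h1, h2, hsgn1, hsgn2, ← hkey]
      congr 1
      omega
    · have h1 : ((i : ℕ) / 2) = k := by omega
      have h2 : ((i.rev : ℕ) / 2) = m - 1 - k := by omega
      have hsgn1 : ((-1 : ℤ)) ^ (i : ℕ) = -1 := Odd.neg_one_pow ⟨k, hk⟩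
      have hsgn2 : ((-1 : ℤ)) ^ (i.rev : ℕ) = 1 := Even.neg_one_pow ⟨m - 1 - k, by omega⟩
      rw [h1, h2, hsgn1, hsgn2, ← hkey]
      refine (hmod _ _ ?_).symm
      omega
  -- the updated vectors satisfy the same relation
  have hlast : (⟨q - 1, by omega⟩ : Fin q).rev = ⟨0, by omega⟩ := by
    ext
    simp only [Fin.val_rev, Fin.val_mk]
    omega
  have hab' : Function.update a ⟨q - 1, by omega⟩ (ω ^ ((q : ℤ) - 1))
      = fun i => - (Function.update b ⟨0, by omega⟩ (ω ^ (-((q : ℤ) + 1)))) i.rev := by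
    funext i
    by_cases h : i = (⟨q - 1, by omega⟩ : Fin q)
    · subst h
      rw [Function.update_self, hlast, Function.update_self, ← hkey]
      congr 1
      ring
    · rw [Function.update_of_ne h, Function.update_of_ne, hab]
      intro hc
      exact h (Fin.rev_injective (by rw [hc, hlast]))
  rw [hab', show a = fun i => - b i.rev from funext hab, vand_neg_rev, vand_neg_rev]
  ring
end

section
/- Let q ∈ ℕ and let ω_1, ..., ω_{2q} be the 2q-th roots of -1 ordered so that for any ρ in the open sector 0 < arg ρ < π/(2q), Re(ρω_1) ≤ Re(ρω_2) ≤ ... ≤ Re(ρω_{2q}). Then with ω = e^{iπ/(2q)}, the ordered list is (ω^{2q-1}, ω^{-(2q-1)}, ω^{2q-3}, ω^{-(2q-3)}, ..., ω^3, ω^{-3}, ω^1, ω^{-1}); in particular ω_q = ω^{-(q+1)} and ω_{q+1} = ω^{q-1} = -ω_q when q is even. -/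
/-!
With `α = π / (2q)` and `θ = arg ρ ∈ (0, α)` we have `Re (ρ ω^n) = ‖ρ‖ cos (θ + n α)`. For the odd
exponents `|n| ≤ 2q - 1` the angle `θ + n α` lies in `[-π, π]`, where `cos` decreases in `|·|`, and
along the list the absolute values of these angles decrease: both the step `m ↦ -m` and the step
`-m ↦ m - 2` are instances of `|a - b| ≤ |a + b|` for `a, b ≥ 0` (with `a, b = θ, m α`, resp.
`(m - 1) α, α - θ`). Injectivity holds because `ω` is a primitive `4q`-th root of unity.
-/

open Complex

lemma abs_sub_le_abs_add_of_nonneg {α : Type*} [AddCommGroup α] [LinearOrder α]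
    [IsOrderedAddMonoid α] {a b : α} (ha : 0 ≤ a) (hb : 0 ≤ b) : |a - b| ≤ |a + b| := by
  rw [abs_of_nonneg (add_nonneg ha hb), abs_sub_le_iff]
  exact ⟨(sub_le_self a hb).trans (le_add_of_nonneg_right hb),
    (sub_le_self b ha).trans (le_add_of_nonneg_left ha)⟩

lemma Real.cos_le_cos_of_abs_le {x y : ℝ} (hxy : |x| ≤ |y|) (hy : |y| ≤ Real.pi) :
    Real.cos y ≤ Real.cos x := by
  rw [← Real.cos_abs x, ← Real.cos_abs y]
  exact Real.cos_le_cos_of_nonneg_of_le_pi (abs_nonneg x) hy hxy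

lemma Complex.re_mul_exp_mul_I (ρ : ℂ) (x : ℝ) :
    (ρ * exp (x * I)).re = ‖ρ‖ * Real.cos (arg ρ + x) := by
  conv_lhs => rw [← norm_mul_exp_arg_mul_I ρ, mul_assoc, ← exp_add, ← add_mul, ← ofReal_add]
  rw [re_ofReal_mul, exp_ofReal_mul_I_re]

lemma zpow_pow_eq_neg_one_of_odd {K : Type*} [DivisionRing K] {ω : K} {n : ℕ}
    (hω : ω ^ n = -1) {e : ℤ} (he : Odd e) : (ω ^ e) ^ n = -1 := by
  rw [← zpow_natCast, ← zpow_mul, mul_comm, zpow_mul, zpow_natCast, hω, he.neg_one_zpow]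

lemma IsPrimitiveRoot.zpow_inj {G : Type*} [CommGroupWithZero G] {ζ : G} {k : ℕ}
    (hζ : IsPrimitiveRoot ζ k) {a b : ℤ} (hab : |a - b| < k) (h : ζ ^ a = ζ ^ b) : a = b := by
  have hζ₀ : ζ ≠ 0 := hζ.ne_zero (by have := (abs_nonneg (a - b)).trans_lt hab; omega)
  rw [← sub_eq_zero]
  refine Int.eq_zero_of_abs_lt_dvd ((hζ.zpow_eq_one_iff_dvd _).1 ?_) hab
  rw [zpow_sub₀ hζ₀, h, div_self (zpow_ne_zero b hζ₀)]

/-- `L i = ω ^ orderedExponent q i`; for `i < 2q` these are `2q - 1, -(2q - 1), …, 1, -1`. -/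
def orderedExponent (q i : ℕ) : ℤ := (-1) ^ i * (2 * (q : ℤ) - 1 - 2 * ((i / 2 : ℕ) : ℤ))

lemma orderedExponent_two_mul (q k : ℕ) : orderedExponent q (2 * k) = 2 * q - 1 - 2 * k := by
  simp [orderedExponent, pow_mul]

lemma orderedExponent_two_mul_add_one (q k : ℕ) :
    orderedExponent q (2 * k + 1) = -(2 * q - 1 - 2 * k) := by
  simp [orderedExponent, pow_succ, pow_mul, Nat.mul_add_div]

lemma odd_orderedExponent (q i : ℕ) : Odd (orderedExponent q i) := by
  obtain ⟨k, rfl | rfl⟩ := Nat.even_or_odd' i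
  · rw [orderedExponent_two_mul]; exact Int.odd_iff.2 (by omega)
  · rw [orderedExponent_two_mul_add_one]; exact Int.odd_iff.2 (by omega)

lemma abs_orderedExponent_le {q i : ℕ} (hi : i < 2 * q) : |orderedExponent q i| ≤ 2 * q - 1 := by
  obtain ⟨k, rfl | rfl⟩ := Nat.even_or_odd' i
  · rw [orderedExponent_two_mul, abs_le]; omega
  · rw [orderedExponent_two_mul_add_one, abs_le]; omega

lemma orderedExponent_injOn (q : ℕ) : Set.InjOn (orderedExponent q) (Set.Iio (2 * q)) := by
  intro i hi j hj hij
  simp only [Set.mem_Iio] at hi hj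
  obtain ⟨k, rfl | rfl⟩ := Nat.even_or_odd' i <;> obtain ⟨l, rfl | rfl⟩ := Nat.even_or_odd' j <;>
    simp only [orderedExponent_two_mul, orderedExponent_two_mul_add_one] at hij <;> omega

lemma orderedExponent_self_of_even {q : ℕ} (hq : Even q) : orderedExponent q q = q - 1 := by
  obtain ⟨t, rfl⟩ := hq
  rw [← Nat.two_mul, orderedExponent_two_mul]; push_cast; ring

lemma orderedExponent_pred_self_of_even {q : ℕ} (hq : Even q) :
    orderedExponent q (q - 1) = -(q + 1) := by
  obtain ⟨t, rfl⟩ := hq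
  rcases t with _ | t
  · rfl
  · rw [show t + 1 + (t + 1) - 1 = 2 * t + 1 by omega, orderedExponent_two_mul_add_one]
    push_cast; ring

section Angles

variable {q : ℕ} {θ α : ℝ}

lemma abs_add_orderedExponent_succ_mul_le (hθ : 0 ≤ θ) (hθα : θ ≤ α) {i : ℕ}
    (hi : i + 1 < 2 * q) :
    |θ + orderedExponent q (i + 1) * α| ≤ |θ + orderedExponent q i * α| := by
  have hα : 0 ≤ α := hθ.trans hθα
  obtain ⟨k, rfl | rfl⟩ := Nat.even_or_odd' i
  · rw [orderedExponent_two_mul_add_one, orderedExponent_two_mul]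
    set m : ℤ := 2 * q - 1 - 2 * k
    have hm : (0 : ℝ) ≤ m * α := mul_nonneg (by exact_mod_cast (by omega : 0 ≤ m)) hα
    rw [Int.cast_neg, neg_mul, ← sub_eq_add_neg]
    exact abs_sub_le_abs_add_of_nonneg hθ hm
  · rw [show 2 * k + 1 + 1 = 2 * (k + 1) by ring, orderedExponent_two_mul,
      orderedExponent_two_mul_add_one]
    set m : ℤ := 2 * q - 1 - 2 * k
    have hm : (0 : ℝ) ≤ (m - 1) * α :=
      mul_nonneg (sub_nonneg.2 (by exact_mod_cast (by omega : 1 ≤ m))) hα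
    calc |θ + ((2 * q - 1 - 2 * (k + 1 : ℕ) : ℤ) : ℝ) * α| = |(m - 1) * α - (α - θ)| := by
          congr 1; push_cast [m]; ring
      _ ≤ |(m - 1) * α + (α - θ)| := abs_sub_le_abs_add_of_nonneg hm (by linarith)
      _ = |θ + ((-m : ℤ) : ℝ) * α| := by rw [← abs_neg]; congr 1; push_cast; ring

lemma abs_add_orderedExponent_mul_antitone (hθ : 0 ≤ θ) (hθα : θ ≤ α) {i j : ℕ} (hij : i ≤ j)
    (hj : j < 2 * q) : |θ + orderedExponent q j * α| ≤ |θ + orderedExponent q i * α| := by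
  induction j, hij using Nat.le_induction with
  | base => exact le_rfl
  | succ j _ ih => exact (abs_add_orderedExponent_succ_mul_le hθ hθα hj).trans (ih (by omega))

lemma abs_add_orderedExponent_mul_le_pi (hα : 2 * q * α = Real.pi) (hθ : 0 ≤ θ)
    (hθα : θ ≤ α) {i : ℕ} (hi : i < 2 * q) : |θ + orderedExponent q i * α| ≤ Real.pi := by
  have hα₀ : 0 ≤ α := hθ.trans hθα
  have he : |(orderedExponent q i : ℝ)| ≤ 2 * q - 1 := by
    exact_mod_cast abs_orderedExponent_le hi
  calc |θ + orderedExponent q i * α| ≤ |θ| + |(orderedExponent q i : ℝ)| * α := by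
        rw [← abs_of_nonneg hα₀, ← abs_mul, abs_of_nonneg hα₀]; exact abs_add_le _ _
    _ ≤ α + (2 * q - 1) * α := by
        rw [abs_of_nonneg hθ]; exact add_le_add hθα (mul_le_mul_of_nonneg_right he hα₀)
    _ = Real.pi := by linarith

lemma re_mul_exp_orderedExponent_mul_le (hα : 2 * q * α = Real.pi) {ρ : ℂ} (hρ : 0 ≤ arg ρ)
    (hρα : arg ρ ≤ α) {i j : ℕ} (hij : i ≤ j) (hj : j < 2 * q) :
    (ρ * exp ((orderedExponent q i * α : ℝ) * I)).re ≤
      (ρ * exp ((orderedExponent q j * α : ℝ) * I)).re := by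
  rw [re_mul_exp_mul_I, re_mul_exp_mul_I]
  exact mul_le_mul_of_nonneg_left (Real.cos_le_cos_of_abs_le
    (abs_add_orderedExponent_mul_antitone hρ hρα hij hj)
    (abs_add_orderedExponent_mul_le_pi hα hρ hρα (hij.trans_lt hj))) (norm_nonneg ρ)

end Angles

/-- Ordering of the `2q`-th roots of `-1`: with `ω = e^{iπ/(2q)}`, the list
`L = (ω^{2q-1}, ω^{-(2q-1)}, ω^{2q-3}, ω^{-(2q-3)}, …, ω^3, ω^{-3}, ω^1, ω^{-1})`
consists of `2q`-th roots of `-1`, is injective (so lists all of them), and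
satisfies `Re(ρ L_1) ≤ Re(ρ L_2) ≤ … ≤ Re(ρ L_{2q})` for every `ρ` in the open
sector `0 < arg ρ < π/(2q)`; in particular (with 1-based indexing)
`ω_q = ω^{-(q+1)}`, `ω_{q+1} = ω^{q-1} = -ω_q` when `q` is even. -/
theorem roots_of_neg_one_ordering (q : ℕ) (hq : 1 ≤ q)
    (ω : ℂ) (hω : ω = Complex.exp (Real.pi * Complex.I / (2 * q)))
    (L : Fin (2 * q) → ℂ)
    (hL : ∀ i : Fin (2 * q),
      L i = ω ^ ((-1 : ℤ) ^ (i : ℕ) * (2 * (q : ℤ) - 1 - 2 * (((i : ℕ) / 2 : ℕ) : ℤ)))) :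
    (∀ i, L i ^ (2 * q) = -1) ∧
    Function.Injective L ∧
    (∀ ρ : ℂ, 0 < ρ.arg → ρ.arg < Real.pi / (2 * q) →
      ∀ i j : Fin (2 * q), i ≤ j → (ρ * L i).re ≤ (ρ * L j).re) ∧
    (Even q →
      L ⟨q, by omega⟩ = ω ^ ((q : ℤ) - 1) ∧
      L ⟨q - 1, by omega⟩ = ω ^ (-((q : ℤ) + 1)) ∧
      L ⟨q, by omega⟩ = -L ⟨q - 1, by omega⟩) := by
  have hL' : ∀ i, L i = ω ^ orderedExponent q i := hL
  have hζ : IsPrimitiveRoot ω (4 * q) := by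
    rw [hω]; convert isPrimitiveRoot_exp (4 * q) (by omega) using 2; push_cast; ring
  have hω₀ : ω ≠ 0 := hζ.ne_zero (by omega)
  have hω2q : ω ^ (2 * q) = -1 :=
    (hζ.pow (by omega) (by ring : 4 * q = 2 * q * 2)).eq_neg_one_of_two_right
  refine ⟨fun i => ?_, fun i j hij => ?_, fun ρ hρ hρα i j hij => ?_, fun hq2 => ?_⟩
  · rw [hL']
    exact zpow_pow_eq_neg_one_of_odd hω2q (odd_orderedExponent q i)
  · rw [hL', hL'] at hij
    have hi := abs_le.1 (abs_orderedExponent_le i.2)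
    have hj := abs_le.1 (abs_orderedExponent_le j.2)
    refine Fin.ext (orderedExponent_injOn q i.2 j.2 (hζ.zpow_inj ?_ hij))
    rw [abs_lt]; push_cast; omega
  · have hα : 2 * q * (Real.pi / (2 * q)) = Real.pi := by field_simp
    have hpow (n : ℤ) : ω ^ n = exp ((n * (Real.pi / (2 * q)) : ℝ) * I) := by
      rw [hω, ← exp_int_mul]; push_cast; ring_nf
    rw [hL', hL', hpow, hpow]
    exact re_mul_exp_orderedExponent_mul_le hα hρ.le hρα.le hij j.2
  · have hLq : L ⟨q, by omega⟩ = ω ^ ((q : ℤ) - 1) := by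
      rw [hL', orderedExponent_self_of_even hq2]
    have hLq' : L ⟨q - 1, by omega⟩ = ω ^ (-((q : ℤ) + 1)) := by
      rw [hL', orderedExponent_pred_self_of_even hq2]
    refine ⟨hLq, hLq', ?_⟩
    rw [hLq, hLq', show (q : ℤ) - 1 = -(q + 1) + (2 * q : ℕ) by push_cast; ring, zpow_add₀ hω₀,
      zpow_natCast, hω2q, mul_neg_one]
end

section
/- Let {σ_j(s)}, s ∈ [0,1], be a family of quasi-frequencies that is equicontinuous in s with |σ_{j+1}(s) - σ_j(s)| ≥ c > 0 for all j large, and let {λ_j(s)} be eigenvalue sequences monotone nondecreasing in s, with maps k(j,s) satisfying |σ_j(s) - λ_{k(j,s)}(s)| → 0 as j → ∞ uniformly in s. If k(j,0) = j and k(j,1) = j for all sufficiently large j, then for each s ∈ [0,1] there exists N such that k(j,s) = j for all j ≥ N. -/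
open Set Filter

/-- Completeness propagation for quasi-frequencies: let `σ_j(s)` be a family of
quasi-frequencies (nondecreasing in `j`, tending to `∞`), equicontinuous in
`s ∈ [0,1]` uniformly in `j`, with a uniform gap `|σ_{j+1}(s) - σ_j(s)| ≥ c > 0`
for large `j`; let `λ_j(s)` be eigenvalue sequences nondecreasing in `j` and
monotone nondecreasing in `s`, with index maps `k(j,s)` satisfying
`|σ_j(s) - λ_{k(j,s)}(s)| → 0` as `j → ∞` uniformly in `s`.  If `k(j,0) = j`
and `k(j,1) = j` for all sufficiently large `j`, then for each `s ∈ [0,1]`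
there is `N` with `k(j,s) = j` for all `j ≥ N`. -/
theorem completeness_propagation
    (σ lam : ℕ → ℝ → ℝ) (k : ℕ → ℝ → ℕ)
    (hσmono : ∀ s ∈ Set.Icc (0 : ℝ) 1, Monotone fun j => σ j s)
    (hσtop : ∀ s ∈ Set.Icc (0 : ℝ) 1,
      Tendsto (fun j => σ j s) atTop atTop)
    (hequi : ∀ ε > (0 : ℝ), ∃ δ > (0 : ℝ), ∀ j : ℕ,
      ∀ s ∈ Set.Icc (0 : ℝ) 1, ∀ s' ∈ Set.Icc (0 : ℝ) 1,
        |s - s'| < δ → |σ j s - σ j s'| < ε)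
    (c : ℝ) (hc : 0 < c)
    (hgap : ∃ J : ℕ, ∀ j ≥ J, ∀ s ∈ Set.Icc (0 : ℝ) 1,
      c ≤ |σ (j + 1) s - σ j s|)
    (hlamj : ∀ s ∈ Set.Icc (0 : ℝ) 1, Monotone fun j => lam j s)
    (hlams : ∀ j : ℕ, MonotoneOn (lam j) (Set.Icc (0 : ℝ) 1))
    (happrox : ∀ ε > (0 : ℝ), ∃ J : ℕ, ∀ j ≥ J, ∀ s ∈ Set.Icc (0 : ℝ) 1,
      |σ j s - lam (k j s) s| < ε)
    (hend : ∃ J : ℕ, ∀ j ≥ J, k j 0 = j ∧ k j 1 = j) :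
    ∀ s ∈ Set.Icc (0 : ℝ) 1, ∃ N : ℕ, ∀ j ≥ N, k j s = j := by
  obtain ⟨δ, hδ, hδequi⟩ := hequi (c/8) (by linarith)
  obtain ⟨J₁, hJ₁⟩ := happrox (c/8) (by linarith)
  obtain ⟨J₂, hJ₂⟩ := hgap
  obtain ⟨J₃, hJ₃⟩ := hend
  have h0mem : (0:ℝ) ∈ Set.Icc (0:ℝ) 1 := by norm_num
  have h1mem : (1:ℝ) ∈ Set.Icc (0:ℝ) 1 := by norm_num
  -- gap in usable form
  have gap : ∀ j ≥ J₂, ∀ s ∈ Set.Icc (0:ℝ) 1, σ j s + c ≤ σ (j+1) s := by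
    intro j hj s hs
    have h1 := hJ₂ j hj s hs
    have h2 : σ j s ≤ σ (j+1) s := hσmono s hs (Nat.le_succ j)
    rw [abs_of_nonneg (by linarith)] at h1
    linarith
  -- if λ_j(s) ≥ σ_j(s) - c/4 for large j, then k(j,s) ≤ j for large j
  have kle : ∀ s ∈ Set.Icc (0:ℝ) 1, ∀ J : ℕ, (∀ j ≥ J, σ j s - c/4 ≤ lam j s) →
      ∀ j ≥ max J (max J₁ J₂), k j s ≤ j := by
    intro s hs J hJ j hj
    by_contra hcon
    push_neg at hcon
    have hjJ : j ≥ J := le_trans (le_max_left _ _) hj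
    have hj1 : j ≥ J₁ := le_trans (le_trans (le_max_left _ _) (le_max_right _ _)) hj
    have hj2 : j ≥ J₂ := le_trans (le_trans (le_max_right _ _) (le_max_right _ _)) hj
    have h1 : σ (j+1) s - c/4 ≤ lam (j+1) s := hJ (j+1) (le_trans hjJ (Nat.le_succ j))
    have h2 : lam (j+1) s ≤ lam (k j s) s := hlamj s hs hcon
    have h3 := abs_lt.1 (hJ₁ j hj1 s hs)
    have h4 := gap j hj2 s hs
    linarith
  -- if λ_j(s) ≤ σ_j(s) + c/4 for large j, then k(j,s) ≥ j for large j
  have kge : ∀ s ∈ Set.Icc (0:ℝ) 1, ∀ J : ℕ, (∀ j ≥ J, lam j s ≤ σ j s + c/4) →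
      ∀ j ≥ max J (max J₁ J₂) + 1, j ≤ k j s := by
    intro s hs J hJ j hj
    by_contra hcon
    push_neg at hcon
    obtain ⟨i, rfl⟩ : ∃ i, j = i + 1 := ⟨j - 1, by omega⟩
    have hiJ : i ≥ J := by
      have := le_trans (le_max_left _ _) (Nat.le_of_succ_le_succ hj); omega
    have hj1 : i + 1 ≥ J₁ := by
      have := le_trans (le_trans (le_max_left _ _) (le_max_right _ _))
        (Nat.le_of_succ_le_succ hj); omega
    have hi2 : i ≥ J₂ := by
      have := le_trans (le_trans (le_max_right _ _) (le_max_right _ _))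
        (Nat.le_of_succ_le_succ hj); omega
    have h1 : lam i s ≤ σ i s + c/4 := hJ i hiJ
    have h2 : lam (k (i+1) s) s ≤ lam i s := hlamj s hs (by omega)
    have h3 := abs_lt.1 (hJ₁ (i+1) hj1 s hs)
    have h4 := gap i hi2 s hs
    linarith
  -- lower bound property H
  set H : ℝ → Prop := fun s => ∃ J : ℕ, ∀ j ≥ J, σ j s - c/8 ≤ lam j s with hHdef
  set U : ℝ → Prop := fun s => ∃ J : ℕ, ∀ j ≥ J, lam j s ≤ σ j s + c/8 with hUdef
  have H0 : H 0 := by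
    refine ⟨max J₁ J₃, fun j hj => ?_⟩
    have h1 := hJ₁ j (le_trans (le_max_left _ _) hj) 0 h0mem
    rw [(hJ₃ j (le_trans (le_max_right _ _) hj)).1] at h1
    have := abs_lt.1 h1
    linarith
  have U1 : U 1 := by
    refine ⟨max J₁ J₃, fun j hj => ?_⟩
    have h1 := hJ₁ j (le_trans (le_max_left _ _) hj) 1 h1mem
    rw [(hJ₃ j (le_trans (le_max_right _ _) hj)).2] at h1
    have := abs_lt.1 h1
    linarith
  -- propagation step for H (rightwards)
  have stepH : ∀ s' ∈ Set.Icc (0:ℝ) 1, ∀ s ∈ Set.Icc (0:ℝ) 1,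
      s' ≤ s → s - s' < δ → H s' → H s := by
    intro s' hs' s hs hle hd ⟨J, hJ⟩
    have hquart : ∀ j ≥ J, σ j s - c/4 ≤ lam j s := by
      intro j hj
      have h1 : lam j s' ≤ lam j s := hlams j hs' hs hle
      have h2 := abs_lt.1 (hδequi j s hs s' hs' (by rw [abs_of_nonneg (by linarith)]; linarith))
      have h3 := hJ j hj
      linarith
    refine ⟨max J (max J₁ J₂), fun j hj => ?_⟩
    have hk := kle s hs J hquart j hj
    have h1 : lam (k j s) s ≤ lam j s := hlamj s hs hk
    have h2 := abs_lt.1 (hJ₁ j (le_trans (le_trans (le_max_left _ _) (le_max_right _ _)) hj) s hs)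
    linarith
  -- propagation step for U (leftwards)
  have stepU : ∀ s' ∈ Set.Icc (0:ℝ) 1, ∀ s ∈ Set.Icc (0:ℝ) 1,
      s ≤ s' → s' - s < δ → U s' → U s := by
    intro s' hs' s hs hle hd ⟨J, hJ⟩
    have hquart : ∀ j ≥ J, lam j s ≤ σ j s + c/4 := by
      intro j hj
      have h1 : lam j s ≤ lam j s' := hlams j hs hs' hle
      have h2 := abs_lt.1 (hδequi j s hs s' hs' (by rw [abs_of_nonpos (by linarith)]; linarith))
      have h3 := hJ j hj
      linarith
    refine ⟨max J (max J₁ J₂) + 1, fun j hj => ?_⟩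
    have hk := kge s hs J hquart j hj
    have h1 : lam j s ≤ lam (k j s) s := hlamj s hs hk
    have h2 := abs_lt.1 (hJ₁ j (le_trans (le_trans (le_trans (le_max_left _ _)
      (le_max_right _ _)) (Nat.le_succ _)) hj) s hs)
    linarith
  have hδ2 : (0:ℝ) < δ/2 := by linarith
  -- H holds everywhere
  have Hall : ∀ s ∈ Set.Icc (0:ℝ) 1, H s := by
    have key : ∀ n : ℕ, ∀ s ∈ Set.Icc (0:ℝ) 1, s ≤ n * (δ/2) → H s := by
      intro n
      induction n with
      | zero =>
        intro s hs h
        have : s = 0 := le_antisymm (by simpa using h) hs.1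
        rwa [this]
      | succ n ih =>
        intro s hs h
        by_cases hcase : s ≤ n * (δ/2)
        · exact ih s hs hcase
        · push_neg at hcase
          set s' := max 0 (s - δ/2) with hs'def
          have hs'mem : s' ∈ Set.Icc (0:ℝ) 1 :=
            ⟨le_max_left _ _, max_le (by norm_num) (by linarith [hs.2])⟩
          have hs'le : s' ≤ n * (δ/2) := by
            apply max_le
            · positivity
            · push_cast at h ⊢; linarith
          have hle : s' ≤ s := max_le hs.1 (by linarith)
          have hsmall : s - s' < δ := by
            have : s - δ/2 ≤ s' := le_max_right _ _
            linarith
          exact stepH s' hs'mem s hs hle hsmall (ih s' hs'mem hs'le)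
    intro s hs
    obtain ⟨n, hn⟩ := exists_nat_ge (s / (δ/2))
    refine key n s hs ?_
    calc s = s / (δ/2) * (δ/2) := by field_simp
    _ ≤ n * (δ/2) := by apply mul_le_mul_of_nonneg_right hn (le_of_lt hδ2)
  -- U holds everywhere
  have Uall : ∀ s ∈ Set.Icc (0:ℝ) 1, U s := by
    have key : ∀ n : ℕ, ∀ s ∈ Set.Icc (0:ℝ) 1, 1 - s ≤ n * (δ/2) → U s := by
      intro n
      induction n with
      | zero =>
        intro s hs h
        have : s = 1 := le_antisymm hs.2 (by simpa using h)
        rwa [this]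
      | succ n ih =>
        intro s hs h
        by_cases hcase : 1 - s ≤ n * (δ/2)
        · exact ih s hs hcase
        · push_neg at hcase
          set s' := min 1 (s + δ/2) with hs'def
          have hs'mem : s' ∈ Set.Icc (0:ℝ) 1 :=
            ⟨le_min (by norm_num) (by linarith [hs.1]), min_le_left _ _⟩
          have hs'le : 1 - s' ≤ n * (δ/2) := by
            rcases le_or_gt 1 (s + δ/2) with h' | h'
            · have he : s' = 1 := min_eq_left h'
              rw [he]; norm_num; positivity
            · have he : s' = s + δ/2 := min_eq_right (le_of_lt h')
              rw [he]; push_cast at h ⊢; linarith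
          have hle : s ≤ s' := le_min hs.2 (by linarith)
          have hsmall : s' - s < δ := by
            have : s' ≤ s + δ/2 := min_le_right _ _
            linarith
          exact stepU s' hs'mem s hs hle hsmall (ih s' hs'mem hs'le)
    intro s hs
    obtain ⟨n, hn⟩ := exists_nat_ge ((1 - s) / (δ/2))
    refine key n s hs ?_
    calc 1 - s = (1 - s) / (δ/2) * (δ/2) := by field_simp
    _ ≤ n * (δ/2) := by apply mul_le_mul_of_nonneg_right hn (le_of_lt hδ2)
  -- conclude
  intro s hs
  obtain ⟨JH, hJH⟩ := Hall s hs
  obtain ⟨JU, hJU⟩ := Uall s hs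
  refine ⟨max (max JH JU) (max J₁ J₂) + 1, fun j hj => ?_⟩
  have hm : max (max JH JU) (max J₁ J₂) < j := Nat.lt_of_succ_le hj
  have hJHj : JH < j := lt_of_le_of_lt (le_trans (le_max_left _ _) (le_max_left _ _)) hm
  have hJUj : JU < j := lt_of_le_of_lt (le_trans (le_max_right _ _) (le_max_left _ _)) hm
  have h12 : max J₁ J₂ < j := lt_of_le_of_lt (le_max_right _ _) hm
  have hle : k j s ≤ j :=
    kle s hs JH (fun i hi => by have := hJH i hi; linarith) j
      (max_le (le_of_lt hJHj) (le_of_lt h12))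
  have hge : j ≤ k j s :=
    kge s hs JU (fun i hi => by have := hJU i hi; linarith) j
      (Nat.succ_le_of_lt (max_lt hJUj h12))
  exact le_antisymm hle hge
end
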